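/- arXiv:2202.09638 — 3 statements merged into one kernel-verified Lean document; each statement's English description precedes it below -/
import Mathlib

section
/- If A is a real orthogonal r×r matrix such that for every sign vector q ∈ {−1,1}^r the vector Aᵀq is again a sign vector in {−1,1}^r, then each column of A has exactly one nonzero entry, and that entry is ±1; i.e., A is the product of a permutation matrix and a diagonal matrix with ±1 diagonal entries. -/
open Matrix Finset

/-- If `A` is orthogonal and `Aᵀ` maps every sign vector in `{-1,1}^r` to a sign vector,
then each column of `A` has exactly one nonzero entry, equal to `±1`. -/
theorem stmt3 (r : ℕ) (A : Matrix (Fin r) (Fin r) ℝ) (hA : Aᵀ * A = 1)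
    (h : ∀ q : Fin r → ℝ, (∀ i, q i = 1 ∨ q i = -1) →
      ∀ i, Aᵀ.mulVec q i = 1 ∨ Aᵀ.mulVec q i = -1) :
    ∀ j, ∃ i, (A i j = 1 ∨ A i j = -1) ∧ ∀ i', i' ≠ i → A i' j = 0 := by
  intro j
  have hentry : ∀ i, A i j = 0 ∨ A i j = 1 ∨ A i j = -1 := by
    intro i
    have h1 := h (fun _ => 1) (fun _ => Or.inl rfl) j
    have h2 := h (Function.update (fun _ => (1:ℝ)) i (-1))
      (by intro k; by_cases hk : k = i <;> simp [Function.update, hk]) j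
    simp only [Matrix.mulVec, dotProduct, Matrix.transpose_apply, mul_one] at h1 h2
    have key : ∑ k, A k j * Function.update (fun _ => (1:ℝ)) i (-1) k
        = (∑ k, A k j) - 2 * A i j := by
      have hf : (fun k => A k j * Function.update (fun _ => (1:ℝ)) i (-1) k)
          = Function.update (fun k => A k j) i (-(A i j)) := by
        funext k
        by_cases hk : k = i <;> simp [Function.update, hk]
      rw [hf, Finset.sum_update_of_mem (Finset.mem_univ i),
        Finset.sum_eq_sum_sdiff_singleton_add (Finset.mem_univ i) (fun k => A k j)]
      ring
    rw [key] at h2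
    rcases h1 with h1 | h1 <;> rcases h2 with h2 | h2 <;>
      first
        | (left; linarith)
        | (right; left; linarith)
        | (right; right; linarith)
  have hsum : ∑ k, A k j * A k j = 1 := by
    have := congrFun (congrFun hA j) j
    simpa [Matrix.mul_apply, Matrix.one_apply] using this
  have hsq : ∀ k, A k j * A k j = if A k j = 0 then 0 else 1 := by
    intro k
    rcases hentry k with hk | hk | hk <;> simp [hk]
  rw [Finset.sum_congr rfl (fun k _ => hsq k)] at hsum
  rw [Finset.sum_ite, Finset.sum_const, Finset.sum_const] at hsum
  simp at hsum
  have hcard : (Finset.univ.filter (fun k => ¬ A k j = 0)).card = 1 := by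
    exact_mod_cast hsum
  obtain ⟨i, hi⟩ := Finset.card_eq_one.mp hcard
  refine ⟨i, ?_, ?_⟩
  · have : i ∈ Finset.univ.filter (fun k => ¬ A k j = 0) := by rw [hi]; simp
    have hne : A i j ≠ 0 := (Finset.mem_filter.mp this).2
    rcases hentry i with hk | hk | hk
    · exact absurd hk hne
    · exact Or.inl hk
    · exact Or.inr hk
  · intro i' hi'
    by_contra hne
    have : i' ∈ Finset.univ.filter (fun k => ¬ A k j = 0) := by simp [hne]
    rw [hi] at this
    exact hi' (Finset.mem_singleton.mp this)
end

section
/- Let A ∈ ℝ^{r×r} satisfy A_{i,:}·𝟙 ≥ ‖A_{i,:}‖₂ for each row i, and 𝟙ᵀA𝟙 ≤ r. Then |det(A)| ≤ 1, with equality only if A is real orthogonal and satisfies 𝟙ᵀA𝟙 = r and ‖A_{i,:}‖₂ = A_{i,:}𝟙 = 1 for all i. -/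
open Matrix Finset


lemma auxL1 {m : ℕ} (x : Fin m → ℝ) (hx : ∀ i, 0 ≤ x i)
    (hs : ∑ i, x i ≤ m) : ∏ i, x i ≤ 1 := by
  by_cases h0 : ∀ i, 0 < x i
  · have hpos : 0 < ∏ i, x i := Finset.prod_pos fun i _ => h0 i
    have hlog : Real.log (∏ i, x i) ≤ 0 := by
      rw [Real.log_prod fun i _ => (h0 i).ne']
      calc ∑ i, Real.log (x i) ≤ ∑ i, (x i - 1) :=
            Finset.sum_le_sum fun i _ => Real.log_le_sub_one_of_pos (h0 i)
        _ = (∑ i, x i) - m := by rw [Finset.sum_sub_distrib]; simp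
        _ ≤ 0 := by linarith
    exact (Real.log_nonpos_iff hpos.le).mp hlog
  · push_neg at h0
    obtain ⟨i, hi⟩ := h0
    rw [Finset.prod_eq_zero (Finset.mem_univ i) (le_antisymm hi (hx i))]
    norm_num

lemma auxL2 {m : ℕ} (x : Fin m → ℝ) (hx : ∀ i, 0 ≤ x i)
    (hs : ∑ i, x i ≤ m) (hp : ∏ i, x i = 1) : ∀ i, x i = 1 := by
  have h0 : ∀ i, 0 < x i := by
    intro i
    rcases (hx i).lt_or_eq with h | h
    · exact h
    · exfalso; rw [Finset.prod_eq_zero (Finset.mem_univ i) h.symm] at hp; norm_num at hp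
  by_contra hne
  push_neg at hne
  obtain ⟨j, hj⟩ := hne
  have hsum : ∑ i, Real.log (x i) = 0 := by
    rw [← Real.log_prod fun i _ => (h0 i).ne', hp, Real.log_one]
  have hlt : ∑ i, Real.log (x i) < ∑ i, (x i - 1) :=
    Finset.sum_lt_sum (fun i _ => Real.log_le_sub_one_of_pos (h0 i))
      ⟨j, Finset.mem_univ j, Real.log_lt_sub_one_of_pos (h0 j) hj⟩
  rw [Finset.sum_sub_distrib] at hlt
  simp at hlt
  linarith

lemma auxH {r : ℕ} (M : Matrix (Fin r) (Fin r) ℝ)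
    (h : ∀ i, ∑ j, M i j ^ 2 = 1) :
    M.det ^ 2 ≤ 1 ∧ (M.det ^ 2 = 1 → M * Mᵀ = 1) := by
  have hBps : (M * Mᵀ).PosSemidef := by
    have := Matrix.posSemidef_self_mul_conjTranspose M
    simpa using this
  have hB : (M * Mᵀ).IsHermitian := hBps.isHermitian
  have hnn : ∀ i, 0 ≤ hB.eigenvalues i := hBps.eigenvalues_nonneg
  have htr : (M * Mᵀ).trace = (r : ℝ) := by
    simp only [Matrix.trace, Matrix.diag, Matrix.mul_apply, Matrix.transpose_apply, ← sq]
    simp [h]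
  have htr2 : ∑ i, hB.eigenvalues i = (r : ℝ) := by
    have h1 := hB.spectral_theorem
    have h2 := congrArg Matrix.trace h1
    rw [Unitary.conjStarAlgAut_apply, Matrix.trace_mul_cycle] at h2
    rw [(Matrix.mem_unitaryGroup_iff').mp (hB.eigenvectorUnitary).2, Matrix.one_mul] at h2
    rw [htr] at h2
    simpa [Matrix.trace_diagonal] using h2.symm
  have hdet : M.det ^ 2 = ∏ i, hB.eigenvalues i := by
    have := hB.det_eq_prod_eigenvalues
    rw [Matrix.det_mul, Matrix.det_transpose, ← sq] at this
    simpa using this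
  constructor
  · rw [hdet]
    exact auxL1 _ hnn (le_of_eq htr2)
  · intro heq
    rw [hdet] at heq
    have hall : ∀ i, hB.eigenvalues i = 1 := auxL2 _ hnn (le_of_eq htr2) heq
    have h1 := hB.spectral_theorem
    have hf : (RCLike.ofReal ∘ hB.eigenvalues : Fin r → ℝ) = fun _ => (1 : ℝ) := by
      funext i; simp [hall i]
    have hd : Matrix.diagonal (RCLike.ofReal ∘ hB.eigenvalues) = (1 : Matrix (Fin r) (Fin r) ℝ) := by
      rw [hf, Matrix.diagonal_one]
    rw [hd, Unitary.conjStarAlgAut_apply, Matrix.mul_one, (Matrix.mem_unitaryGroup_iff).mp (hB.eigenvectorUnitary).2] at h1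
    exact h1

/-- If every row of `A` satisfies `A_{i,:}·𝟙 ≥ ‖A_{i,:}‖₂` and `𝟙ᵀA𝟙 ≤ r`, then
`|det A| ≤ 1`, with equality only if `A` is orthogonal with `𝟙ᵀA𝟙 = r` and
`‖A_{i,:}‖₂ = A_{i,:}𝟙 = 1` for all `i`. -/
theorem stmt14 (r : ℕ) (A : Matrix (Fin r) (Fin r) ℝ)
    (h1 : ∀ i, Real.sqrt (∑ j, (A i j) ^ 2) ≤ ∑ j, A i j)
    (h2 : ∑ i, ∑ j, A i j ≤ (r : ℝ)) :
    |A.det| ≤ 1 ∧ (|A.det| = 1 →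
      A * Aᵀ = 1 ∧ (∑ i, ∑ j, A i j = (r : ℝ)) ∧
      ∀ i, Real.sqrt (∑ j, (A i j) ^ 2) = 1 ∧ ∑ j, A i j = 1) := by
  rcases Nat.eq_zero_or_pos r with hr | hr
  · subst hr
    exact ⟨by simp [Matrix.det_fin_zero], fun _ =>
      ⟨Subsingleton.elim _ _, by simp, fun i => i.elim0⟩⟩
  have hq0 : ∀ i, (0:ℝ) ≤ ∑ j, A i j ^ 2 := fun i => Finset.sum_nonneg fun j _ => sq_nonneg _
  have hn0 : ∀ i, (0:ℝ) ≤ Real.sqrt (∑ j, A i j ^ 2) := fun i => Real.sqrt_nonneg _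
  have hs0 : ∀ i, (0:ℝ) ≤ ∑ j, A i j := fun i => (hn0 i).trans (h1 i)
  have hqn : ∀ i, ∑ j, A i j ^ 2 = Real.sqrt (∑ j, A i j ^ 2) ^ 2 :=
    fun i => (Real.sq_sqrt (hq0 i)).symm
  by_cases hz : ∀ i, 0 < Real.sqrt (∑ j, A i j ^ 2)
  · set n : Fin r → ℝ := fun i => Real.sqrt (∑ j, A i j ^ 2) with hn
    set M : Matrix (Fin r) (Fin r) ℝ := Matrix.of fun i j => A i j / n i with hM
    have hMrow : ∀ i, ∑ j, M i j ^ 2 = 1 := by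
      intro i
      simp only [hM, Matrix.of_apply, div_pow, ← Finset.sum_div]
      rw [← hqn i, hqn i]
      exact div_self (pow_ne_zero 2 (hz i).ne')
    have hAeq : A = Matrix.diagonal n * M := by
      ext i j
      rw [Matrix.diagonal_mul]
      simp only [hM, Matrix.of_apply]
      rw [mul_div_cancel₀ _ (hz i).ne']
    have hdetA : A.det = (∏ i, n i) * M.det := by
      rw [hAeq, Matrix.det_mul, Matrix.det_diagonal]
    obtain ⟨hMle, hMeq⟩ := auxH M hMrow
    have hMabs : |M.det| ≤ 1 := (sq_le_one_iff_abs_le_one _).mp hMle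
    have hpn : (0:ℝ) < ∏ i, n i := Finset.prod_pos fun i _ => hz i
    have hprodle : ∏ i, n i ≤ ∏ i, ∑ j, A i j :=
      Finset.prod_le_prod (fun i _ => hn0 i) (fun i _ => h1 i)
    have hsle : ∏ i, ∑ j, A i j ≤ 1 := auxL1 _ hs0 h2
    have habs : |A.det| = (∏ i, n i) * |M.det| := by
      rw [hdetA, abs_mul, abs_of_pos hpn]
    have hbound : |A.det| ≤ 1 := by
      rw [habs]
      calc (∏ i, n i) * |M.det| ≤ (∏ i, n i) * 1 :=
            mul_le_mul_of_nonneg_left hMabs hpn.le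
        _ = ∏ i, n i := mul_one _
        _ ≤ ∏ i, ∑ j, A i j := hprodle
        _ ≤ 1 := hsle
    refine ⟨hbound, fun he => ?_⟩
    have h6 : (∏ i, n i) * |M.det| = 1 := by rw [← habs, he]
    have h7 : (1:ℝ) ≤ ∏ i, n i := by nlinarith [hMabs, hpn]
    have hpneq : ∏ i, n i = 1 := le_antisymm (hprodle.trans hsle) h7
    have hpseq : ∏ i, ∑ j, A i j = 1 := le_antisymm hsle (hpneq ▸ hprodle)
    have hdm : |M.det| = 1 := by rw [hpneq, one_mul] at h6; exact h6
    have hsall : ∀ i, ∑ j, A i j = 1 := auxL2 _ hs0 h2 hpseq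
    have hnsum : ∑ i, n i ≤ (r:ℝ) := (Finset.sum_le_sum fun i _ => h1 i).trans h2
    have hnall : ∀ i, n i = 1 := auxL2 _ hn0 hnsum hpneq
    have hMA : M = A := by
      ext i j
      simp only [hM, Matrix.of_apply, hnall i, div_one]
    have hMM : M * Mᵀ = 1 := hMeq (by rw [← sq_abs, hdm, one_pow])
    refine ⟨by rwa [hMA] at hMM, ?_, fun i => ⟨hnall i, hsall i⟩⟩
    simp [hsall]
  · push_neg at hz
    obtain ⟨i, hi⟩ := hz
    have hq : ∑ j, A i j ^ 2 = 0 := by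
      have := Real.sqrt_eq_zero (hq0 i) |>.mp (le_antisymm hi (hn0 i))
      exact this
    have hrow : ∀ j, A i j = 0 := by
      intro j
      have := (Finset.sum_eq_zero_iff_of_nonneg fun j _ => sq_nonneg (A i j)).mp hq j
        (Finset.mem_univ j)
      exact pow_eq_zero_iff (n := 2) (by norm_num) |>.mp this
    have hdet : A.det = 0 := Matrix.det_eq_zero_of_row_eq_zero i hrow
    rw [hdet]
    simp
end

section
/- The maximum-volume inscribed ellipsoid of the polytope B_{1,+} = {x ∈ ℝ^r : x ≥ 0, 𝟙ᵀx ≤ 1} is the ellipsoid {C u + g : ‖u‖₂ ≤ 1} with center g = (1/(r+1))𝟙 and shape matrix C = (1/√r)·[(1/√(r+1)) I − ((√(r+1) − 1)/(r² + r)) 𝟙𝟙ᵀ]; in particular C² = (1/r)[(1/(r+1)) I − (1/(r+1)²) 𝟙𝟙ᵀ]. -/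
/-!
The candidate `C = a • 1 + b • 𝟙𝟙ᵀ` touches every facet of the simplex: each row of `C` and the
vector `𝟙ᵀC` have Euclidean norm `1/(r+1)`, which is exactly the slack `gᵢ` resp. `1 - 𝟙ᵀg` of the
centre. For optimality, `C⁻¹ = r(r+1) C + √r 𝟙𝟙ᵀ`. If the ellipsoid of `(C', g')` is inscribed,
Cauchy–Schwarz against the facet constraints gives
`tr (C⁻¹ C') ≤ r(r+1) · ∑ g'ᵢ/(r+1) + √r · √r (1 - ∑ g'ᵢ) = r`,
and AM–GM on the eigenvalues of the positive semidefinite matrix `B C⁻¹ Bᴴ`, where `C' = Bᴴ B`,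
turns this into `det C' / det C = det (C⁻¹ C') ≤ (tr (C⁻¹ C') / r) ^ r ≤ 1`.
-/

open Matrix Finset

local notation "𝟙𝟙ᵀ" => Matrix.of fun _ _ => (1 : ℝ)

theorem prod_le_sum_div_card_pow {ι : Type*} (s : Finset ι) (z : ι → ℝ)
    (hz : ∀ i ∈ s, 0 ≤ z i) : ∏ i ∈ s, z i ≤ ((∑ i ∈ s, z i) / #s) ^ #s := by
  rcases s.eq_empty_or_nonempty with rfl | hs
  · simp
  have hcard : (0 : ℝ) < #s := by exact_mod_cast hs.card_pos
  have amgm := Real.geom_mean_le_arith_mean s (fun _ ↦ 1) z (fun _ _ ↦ zero_le_one)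
    (by simpa using hcard) hz
  simp only [Real.rpow_one, sum_const, nsmul_eq_mul, mul_one, one_mul] at amgm
  have hprod : 0 ≤ ∏ i ∈ s, z i := prod_nonneg hz
  calc ∏ i ∈ s, z i = ((∏ i ∈ s, z i) ^ (#s : ℝ)⁻¹) ^ #s := by
        rw [← Real.rpow_natCast, ← Real.rpow_mul hprod, inv_mul_cancel₀ hcard.ne', Real.rpow_one]
    _ ≤ ((∑ i ∈ s, z i) / #s) ^ #s := by gcongr

section Determinant

variable {n : Type*} [Fintype n] [DecidableEq n]

theorem Matrix.PosSemidef.det_le_trace_div_card_pow {A : Matrix n n ℝ} (hA : A.PosSemidef) :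
    A.det ≤ (A.trace / Fintype.card n) ^ Fintype.card n := by
  rw [hA.isHermitian.det_eq_prod_eigenvalues, hA.isHermitian.trace_eq_sum_eigenvalues]
  simpa using prod_le_sum_div_card_pow univ _ fun i _ ↦ hA.eigenvalues_nonneg i

open scoped MatrixOrder in
theorem Matrix.PosSemidef.det_mul_le_one_of_trace_le {P S : Matrix n n ℝ} (hP : P.PosSemidef)
    (hS : S.PosSemidef) (htr : (P * S).trace ≤ Fintype.card n) : (P * S).det ≤ 1 := by
  obtain ⟨B, rfl⟩ := CStarAlgebra.nonneg_iff_eq_star_mul_self.mp hS.nonneg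
  rw [star_eq_conjTranspose, ← mul_assoc] at htr ⊢
  rw [det_mul_comm, ← mul_assoc]
  rw [trace_mul_comm, ← mul_assoc] at htr
  have hA := hP.mul_mul_conjTranspose_same B
  calc (B * P * Bᴴ).det ≤ ((B * P * Bᴴ).trace / Fintype.card n) ^ Fintype.card n :=
        hA.det_le_trace_div_card_pow
    _ ≤ 1 := pow_le_one₀ (div_nonneg hA.trace_nonneg (Nat.cast_nonneg _))
        (div_le_one_of_le₀ htr (Nat.cast_nonneg _))

theorem det_le_det_of_mul_eq_one {P C S : Matrix n n ℝ} (hP : P.PosSemidef) (hPC : P * C = 1)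
    (hS : S.PosSemidef) (htr : (P * S).trace ≤ Fintype.card n) : S.det ≤ C.det := by
  have hPC' : P.det * C.det = 1 := by rw [← det_mul, hPC, det_one]
  have hPpos : 0 < P.det := hP.det_nonneg.lt_of_ne fun h ↦ by simp [← h] at hPC'
  have hPS := hP.det_mul_le_one_of_trace_le hS htr
  rw [det_mul] at hPS
  exact le_of_mul_le_mul_left (hPS.trans_eq hPC'.symm) hPpos

end Determinant

section Ellipsoid

variable {m n : Type*} [Fintype m] [Fintype n]

def ellipsoid (C : Matrix m n ℝ) (g : m → ℝ) : Set (m → ℝ) :=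
  {x | ∃ u : n → ℝ, ∑ i, (u i) ^ 2 ≤ 1 ∧ x = C *ᵥ u + g}

def cornerSimplex (n : Type*) [Fintype n] : Set (n → ℝ) :=
  {x | (∀ i, 0 ≤ x i) ∧ ∑ i, x i ≤ 1}

theorem dotProduct_le_sqrt_sum_sq {u : n → ℝ} (hu : ∑ i, u i ^ 2 ≤ 1) (v : n → ℝ) :
    v ⬝ᵥ u ≤ √(∑ i, v i ^ 2) :=
  calc v ⬝ᵥ u ≤ √(∑ i, v i ^ 2) * √(∑ i, u i ^ 2) := Real.sum_mul_le_sqrt_mul_sqrt _ _ _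
    _ ≤ √(∑ i, v i ^ 2) * 1 := by gcongr; exact Real.sqrt_le_one.mpr hu
    _ = √(∑ i, v i ^ 2) := mul_one _

theorem exists_sum_sq_le_one_dotProduct_eq (v : n → ℝ) :
    ∃ u : n → ℝ, ∑ i, u i ^ 2 ≤ 1 ∧ v ⬝ᵥ u = √(∑ i, v i ^ 2) := by
  set t := √(∑ i, v i ^ 2)
  have ht : t ^ 2 = ∑ i, v i ^ 2 := Real.sq_sqrt (sum_nonneg fun i _ ↦ sq_nonneg _)
  rcases eq_or_ne t 0 with h0 | h0
  · exact ⟨0, by simp, by simp [h0]⟩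
  refine ⟨t⁻¹ • v, ?_, ?_⟩
  · simp only [Pi.smul_apply, smul_eq_mul, mul_pow, ← mul_sum, ← ht, inv_pow]
    rw [inv_mul_cancel₀ (pow_ne_zero 2 h0)]
  · simp only [dotProduct, Pi.smul_apply, smul_eq_mul, mul_left_comm _ t⁻¹, ← mul_sum, ← sq, ← ht]
    field_simp

theorem forall_mem_ellipsoid_dotProduct_le_iff (C : Matrix m n ℝ) (g w : m → ℝ) (β : ℝ) :
    (∀ x ∈ ellipsoid C g, w ⬝ᵥ x ≤ β) ↔ √(∑ j, (w ᵥ* C) j ^ 2) + w ⬝ᵥ g ≤ β := by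
  have hval (u : n → ℝ) : w ⬝ᵥ (C *ᵥ u + g) = (w ᵥ* C) ⬝ᵥ u + w ⬝ᵥ g := by
    rw [dotProduct_add, dotProduct_mulVec]
  constructor
  · intro h
    obtain ⟨u, hu, hmax⟩ := exists_sum_sq_le_one_dotProduct_eq (w ᵥ* C)
    simpa [hval, hmax] using h _ ⟨u, hu, rfl⟩
  · rintro h _ ⟨u, hu, rfl⟩
    rw [hval]
    linarith [dotProduct_le_sqrt_sum_sq hu (w ᵥ* C)]

theorem ellipsoid_subset_cornerSimplex_iff [DecidableEq m] (C : Matrix m n ℝ) (g : m → ℝ) :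
    ellipsoid C g ⊆ cornerSimplex m ↔
      (∀ i, √(∑ j, C i j ^ 2) ≤ g i) ∧ √(∑ j, ((1 : m → ℝ) ᵥ* C) j ^ 2) + ∑ i, g i ≤ 1 := by
  have hfacet (i : m) : (∀ x ∈ ellipsoid C g, 0 ≤ x i) ↔ √(∑ j, C i j ^ 2) ≤ g i := by
    have := forall_mem_ellipsoid_dotProduct_le_iff C g (-Pi.single i 1) 0
    simp only [neg_dotProduct, single_one_dotProduct, neg_vecMul, single_one_vecMul, Pi.neg_apply,
      neg_sq, neg_nonpos] at this
    simpa [sub_nonpos, ← sub_eq_add_neg] using this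
  have hsum := forall_mem_ellipsoid_dotProduct_le_iff C g 1 1
  simp only [one_dotProduct] at hsum
  rw [← forall_congr' hfacet, ← hsum]
  exact ⟨fun h ↦ ⟨fun i x hx ↦ (h hx).1 i, fun x hx ↦ (h hx).2⟩,
    fun h x hx ↦ ⟨fun i ↦ h.1 i x hx, h.2 x hx⟩⟩

theorem trace_mul_transpose_le (A B : Matrix m n ℝ) :
    (A * Bᵀ).trace ≤ ∑ i, √(∑ j, A i j ^ 2) * √(∑ j, B i j ^ 2) :=
  sum_le_sum fun _ _ ↦ Real.sum_mul_le_sqrt_mul_sqrt _ _ _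

variable [DecidableEq n] {C : Matrix n n ℝ} {g : n → ℝ}

theorem trace_mul_transpose_le_of_ellipsoid_subset (h : ellipsoid C g ⊆ cornerSimplex n)
    {K : Matrix n n ℝ} {ρ : ℝ} (hK : ∀ i, √(∑ j, K i j ^ 2) ≤ ρ) :
    (C * Kᵀ).trace ≤ ρ * ∑ i, g i := by
  have hrow := ((ellipsoid_subset_cornerSimplex_iff C g).mp h).1
  rw [mul_sum]
  refine (trace_mul_transpose_le C K).trans (sum_le_sum fun i _ ↦ ?_)
  rw [mul_comm ρ]
  exact mul_le_mul (hrow i) (hK i) (Real.sqrt_nonneg _) ((Real.sqrt_nonneg _).trans (hrow i))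

theorem sum_one_vecMul_le_of_ellipsoid_subset (h : ellipsoid C g ⊆ cornerSimplex n) :
    ∑ j, ((1 : n → ℝ) ᵥ* C) j ≤ √(Fintype.card n) * (1 - ∑ i, g i) := by
  have hsum := ((ellipsoid_subset_cornerSimplex_iff C g).mp h).2
  calc ∑ j, ((1 : n → ℝ) ᵥ* C) j = ∑ j, 1 * ((1 : n → ℝ) ᵥ* C) j := by simp
    _ ≤ √(∑ _j : n, (1 : ℝ) ^ 2) * √(∑ j, ((1 : n → ℝ) ᵥ* C) j ^ 2) :=
      Real.sum_mul_le_sqrt_mul_sqrt _ _ _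
    _ ≤ √(Fintype.card n) * (1 - ∑ i, g i) := by
      simp only [one_pow, sum_const, card_univ, nsmul_eq_mul, mul_one]
      gcongr
      linarith

end Ellipsoid

section AllOnes

variable {n : Type*}

theorem transpose_smul_one_add_smul_allOnes [DecidableEq n] (x y : ℝ) :
    (x • 1 + y • 𝟙𝟙ᵀ : Matrix n n ℝ)ᵀ = x • 1 + y • 𝟙𝟙ᵀ := by
  ext i j
  simp [one_apply, eq_comm]

variable [Fintype n]

theorem allOnes_mul_allOnes : (𝟙𝟙ᵀ * 𝟙𝟙ᵀ : Matrix n n ℝ) = (Fintype.card n : ℝ) • 𝟙𝟙ᵀ := by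
  ext i j
  simp [mul_apply]

theorem trace_allOnes_mul (A : Matrix n n ℝ) :
    (𝟙𝟙ᵀ * A).trace = ∑ j, ((1 : n → ℝ) ᵥ* A) j := by
  simp [trace, mul_apply, vecMul, dotProduct]

variable [DecidableEq n]

theorem smul_one_add_smul_allOnes_mul (x y x' y' : ℝ) :
    (x • 1 + y • 𝟙𝟙ᵀ : Matrix n n ℝ) * (x' • 1 + y' • 𝟙𝟙ᵀ) =
      (x * x') • 1 + (x * y' + y * x' + Fintype.card n * y * y') • 𝟙𝟙ᵀ := by
  simp only [add_mul, mul_add, Matrix.smul_mul, Matrix.mul_smul, one_mul, mul_one,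
    allOnes_mul_allOnes, smul_smul]
  module

theorem sum_sq_smul_one_add_smul_allOnes_apply (x y : ℝ) (i : n) :
    ∑ j, (x • 1 + y • 𝟙𝟙ᵀ : Matrix n n ℝ) i j ^ 2 =
      x ^ 2 + 2 * x * y + Fintype.card n * y ^ 2 := by
  have (j : n) : (x • 1 + y • 𝟙𝟙ᵀ : Matrix n n ℝ) i j ^ 2 =
      (if i = j then x ^ 2 + 2 * x * y else 0) + y ^ 2 := by
    by_cases h : i = j
    · simp [h]
      ring
    · simp [h]
  rw [sum_congr rfl fun j _ ↦ this j, sum_add_distrib]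
  simp

theorem one_vecMul_smul_one_add_smul_allOnes (x y : ℝ) :
    (1 : n → ℝ) ᵥ* (x • 1 + y • 𝟙𝟙ᵀ : Matrix n n ℝ) = fun _ ↦ x + Fintype.card n * y := by
  ext j
  simp [vecMul, dotProduct, one_apply, sum_add_distrib]

theorem posSemidef_smul_one_add_smul_allOnes {x y : ℝ} (hx : 0 ≤ x) (hy : 0 ≤ y) :
    (x • 1 + y • 𝟙𝟙ᵀ : Matrix n n ℝ).PosSemidef := by
  have hJ : (𝟙𝟙ᵀ : Matrix n n ℝ).PosSemidef := by
    simpa [vecMulVec] using posSemidef_vecMulVec_self_star (1 : n → ℝ)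
  exact (PosSemidef.one.smul hx).add (hJ.smul hy)

end AllOnes

section MVIE

variable {r : ℕ}

variable (r) in
noncomputable def mvieShape : Matrix (Fin r) (Fin r) ℝ :=
  (1 / (√r * √(r + 1))) • 1 + ((1 - √(r + 1)) / (√r * r * (r + 1))) • 𝟙𝟙ᵀ

variable (r) in
noncomputable def mvieShapeInv : Matrix (Fin r) (Fin r) ℝ :=
  (r * (r + 1) : ℝ) • mvieShape r + √r • 𝟙𝟙ᵀ

theorem mvieShape_eq (hr : 0 < r) : (1 / √r) •
      ((1 / √((r : ℝ) + 1)) • (1 : Matrix (Fin r) (Fin r) ℝ)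
        - ((√((r : ℝ) + 1) - 1) / ((r : ℝ) ^ 2 + r)) • 𝟙𝟙ᵀ) = mvieShape r := by
  have : 0 < √(r : ℝ) := Real.sqrt_pos.mpr (by exact_mod_cast hr)
  rw [mvieShape]
  match_scalars
  · field_simp
  · field_simp
    ring

theorem mvieShape_mul_self (hr : 0 < r) :
    mvieShape r * mvieShape r =
      (1 / (r : ℝ)) • ((1 / ((r : ℝ) + 1)) • 1 - (1 / ((r : ℝ) + 1) ^ 2) • 𝟙𝟙ᵀ) := by
  have : 0 < √(r : ℝ) := Real.sqrt_pos.mpr (by exact_mod_cast hr)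
  rw [mvieShape, smul_one_add_smul_allOnes_mul, Fintype.card_fin]
  match_scalars
  · field_simp
    grind
  · field_simp
    grind

theorem sqrt_sum_sq_mvieShape_apply (hr : 0 < r) (i : Fin r) :
    √(∑ j, mvieShape r i j ^ 2) = 1 / (r + 1) := by
  have : 0 < √(r : ℝ) := Real.sqrt_pos.mpr (by exact_mod_cast hr)
  rw [mvieShape, sum_sq_smul_one_add_smul_allOnes_apply, Fintype.card_fin,
    Real.sqrt_eq_iff_mul_self_eq_of_pos (by positivity)]
  field_simp
  grind

theorem one_vecMul_mvieShape (hr : 0 < r) :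
    (1 : Fin r → ℝ) ᵥ* mvieShape r = fun _ ↦ 1 / (√r * (r + 1)) := by
  have : 0 < √(r : ℝ) := Real.sqrt_pos.mpr (by exact_mod_cast hr)
  rw [mvieShape, one_vecMul_smul_one_add_smul_allOnes, Fintype.card_fin]
  ext
  field_simp
  grind

theorem mvieShapeInv_eq (hr : 0 < r) :
    mvieShapeInv r = (√r * √(r + 1)) • 1 + ((r + 1 - √(r + 1)) / √r) • 𝟙𝟙ᵀ := by
  have : 0 < √(r : ℝ) := Real.sqrt_pos.mpr (by exact_mod_cast hr)
  rw [mvieShapeInv, mvieShape]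
  match_scalars
  · field_simp
    grind
  · field_simp
    grind

theorem mvieShapeInv_mul_mvieShape (hr : 0 < r) : mvieShapeInv r * mvieShape r = 1 := by
  have : 0 < √(r : ℝ) := Real.sqrt_pos.mpr (by exact_mod_cast hr)
  rw [mvieShapeInv_eq hr, mvieShape, smul_one_add_smul_allOnes_mul, Fintype.card_fin]
  match_scalars
  · field_simp
  · field_simp
    grind

theorem posSemidef_mvieShapeInv (hr : 0 < r) : (mvieShapeInv r).PosSemidef := by
  rw [mvieShapeInv_eq hr]
  refine posSemidef_smul_one_add_smul_allOnes (by positivity) (div_nonneg ?_ (Real.sqrt_nonneg _))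
  have : √((r : ℝ) + 1) ≤ r + 1 := Real.sqrt_le_self_iff.mpr (.inr (by simp))
  linarith

theorem ellipsoid_mvieShape_subset (hr : 0 < r) :
    ellipsoid (mvieShape r) (fun _ ↦ 1 / ((r : ℝ) + 1)) ⊆ cornerSimplex (Fin r) := by
  have : 0 < √(r : ℝ) := Real.sqrt_pos.mpr (by exact_mod_cast hr)
  refine (ellipsoid_subset_cornerSimplex_iff _ _).mpr
    ⟨fun i ↦ (sqrt_sum_sq_mvieShape_apply hr i).le, ?_⟩
  rw [one_vecMul_mvieShape hr]
  simp only [sum_const, card_univ, Fintype.card_fin, nsmul_eq_mul]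
  have : (r : ℝ) * (1 / (√r * (r + 1))) ^ 2 = (1 / (r + 1)) ^ 2 := by
    field_simp
    simp
  rw [this, Real.sqrt_sq (by positivity)]
  field_simp
  linarith

theorem trace_mvieShapeInv_mul_le (hr : 0 < r) {C : Matrix (Fin r) (Fin r) ℝ} {g : Fin r → ℝ}
    (h : ellipsoid C g ⊆ cornerSimplex (Fin r)) : (mvieShapeInv r * C).trace ≤ r := by
  have hK := trace_mul_transpose_le_of_ellipsoid_subset h
    fun i ↦ (sqrt_sum_sq_mvieShape_apply hr i).le
  have hJ := sum_one_vecMul_le_of_ellipsoid_subset h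
  rw [mvieShape, transpose_smul_one_add_smul_allOnes, ← mvieShape, trace_mul_comm] at hK
  rw [Fintype.card_fin] at hJ
  rw [mvieShapeInv, add_mul, trace_add, Matrix.smul_mul, Matrix.smul_mul, trace_smul, trace_smul,
    trace_allOnes_mul, smul_eq_mul, smul_eq_mul]
  calc _ ≤ r * (r + 1) * (1 / (r + 1) * ∑ i, g i) + √r * (√r * (1 - ∑ i, g i)) := by
        gcongr
    _ = r := by
      rw [← mul_assoc √(r : ℝ), Real.mul_self_sqrt r.cast_nonneg]
      field_simp
      ring

end MVIE

/-- The maximum-volume inscribed ellipsoid of the simplex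
`B_{1,+} = {x : x ≥ 0, 𝟙ᵀx ≤ 1}` has center `g = 𝟙/(r+1)` and shape matrix
`C = (1/√r)[(1/√(r+1)) I − ((√(r+1)−1)/(r²+r)) 𝟙𝟙ᵀ]`; in particular
`C² = (1/r)[(1/(r+1)) I − (1/(r+1)²) 𝟙𝟙ᵀ]`. -/
theorem stmt15 (r : ℕ) (hr : 0 < r) (C : Matrix (Fin r) (Fin r) ℝ) (g : Fin r → ℝ)
    (hC : C = (1 / Real.sqrt r) •
      ((1 / Real.sqrt ((r : ℝ) + 1)) • (1 : Matrix (Fin r) (Fin r) ℝ)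
        - ((Real.sqrt ((r : ℝ) + 1) - 1) / ((r : ℝ) ^ 2 + r)) •
            Matrix.of fun _ _ => (1 : ℝ)))
    (hg : g = fun _ => 1 / ((r : ℝ) + 1)) :
    ({x | ∃ u : Fin r → ℝ, ∑ i, (u i) ^ 2 ≤ 1 ∧ x = C.mulVec u + g} ⊆
        {x : Fin r → ℝ | (∀ i, 0 ≤ x i) ∧ ∑ i, x i ≤ 1}) ∧
    (∀ (C' : Matrix (Fin r) (Fin r) ℝ) (g' : Fin r → ℝ), C'.PosSemidef →
      {x | ∃ u : Fin r → ℝ, ∑ i, (u i) ^ 2 ≤ 1 ∧ x = C'.mulVec u + g'} ⊆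
        {x : Fin r → ℝ | (∀ i, 0 ≤ x i) ∧ ∑ i, x i ≤ 1} →
      C'.det ≤ C.det) ∧
    C * C = (1 / (r : ℝ)) •
      ((1 / ((r : ℝ) + 1)) • (1 : Matrix (Fin r) (Fin r) ℝ)
        - (1 / ((r : ℝ) + 1) ^ 2) • Matrix.of fun _ _ => (1 : ℝ)) := by
  subst hC hg
  rw [mvieShape_eq hr]
  refine ⟨ellipsoid_mvieShape_subset hr, fun C' g' hC' h ↦ ?_, mvieShape_mul_self hr⟩
  refine det_le_det_of_mul_eq_one (posSemidef_mvieShapeInv hr) (mvieShapeInv_mul_mvieShape hr)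
    hC' ?_
  simpa using trace_mvieShapeInv_mul_le hr h
end
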